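/- Let p be an odd prime and w ∈ V_5. Then #{ [q] ∈ P(V_2^*) : q² is apolar to w } − #{ ([ℓ₁],[ℓ₂]) ∈ P(V_1^*)×P(V_1^*) : ℓ₁²ℓ₂² is apolar to w } = − Σ χ(Disc(f)), where the sum is over all classes [f] ∈ P(V_2^*) with f² apolar to w. -/

import Mathlib

open Finset

/-- Multiplication of binary forms encoded by coefficient tuples: a binary form
`∑ i, f i • x^(a-i) * y^i` of degree `a` is encoded as the tuple `f : Fin (a+1) → k`,
and multiplication of forms is convolution of coefficient tuples. -/
def formMul {k : Type*} [CommRing k] {a b : ℕ} (f : Fin (a + 1) → k)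
    (g : Fin (b + 1) → k) : Fin (a + b + 1) → k :=
  fun i => ∑ q : Fin (a + 1) × Fin (b + 1),
    if (q.1 : ℕ) + (q.2 : ℕ) = (i : ℕ) then f q.1 * g q.2 else 0

/-- The pairing `(w, v) = ∑ i, w i * v i` between `V_n` and `V_n^*`. -/
def pair {k : Type*} [CommRing k] {n : ℕ} (w v : Fin (n + 1) → k) : k :=
  ∑ i, w i * v i

/-- The discriminant of a binary quadratic form `f₀x² + f₁xy + f₂y²`. -/
def disc {k : Type*} [CommRing k] (f : Fin 3 → k) : k := f 1 ^ 2 - 4 * f 0 * f 2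

/-!
Since `l₁²l₂² = (l₁l₂)²`, a pair `([l₁], [l₂])` is counted exactly when `[l₁l₂]` is a class `[f]`
with `f²` apolar to `w`. The second count is therefore the sum, over those classes, of the number
of ordered factorisations of `f` into two linear forms up to scalars. The first factor determines
the second, and the linear factors of `f` correspond to its zeros on `ℙ¹`: a nonzero binary
quadratic form over a finite field of odd characteristic has `1 + χ(Disc f)` of them, a double
zero counting once.
-/

section FormMul

open Polynomial

variable {k : Type*} [CommRing k] {a b : ℕ}

theorem ofFn_formMul [DecidableEq k] (f : Fin (a + 1) → k) (g : Fin (b + 1) → k) :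
    ofFn _ (formMul f g) = ofFn _ f * ofFn _ g := by
  simp only [ofFn_eq_sum_monomial, formMul, sum_mul_sum, monomial_mul_monomial,
    Fintype.sum_prod_type, map_sum, apply_ite (monomial _), map_zero]
  rw [sum_comm]
  refine sum_congr rfl fun i _ => ?_
  rw [sum_comm]
  refine sum_congr rfl fun j _ => ?_
  rw [sum_eq_single ⟨i + j, by omega⟩ (fun n _ hn => if_neg fun h => hn (Fin.ext h.symm))
    (by simp), if_pos rfl]

theorem formMul_smul_left (c : k) (f : Fin (a + 1) → k) (g : Fin (b + 1) → k) :
    formMul (c • f) g = c • formMul f g := by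
  classical
  apply injective_ofFn
  simp only [ofFn_formMul, map_smul, smul_mul_assoc]

theorem formMul_smul_right (c : k) (f : Fin (a + 1) → k) (g : Fin (b + 1) → k) :
    formMul f (c • g) = c • formMul f g := by
  classical
  apply injective_ofFn
  simp only [ofFn_formMul, map_smul, mul_smul_comm]

theorem formMul_sq_mul_sq (u v : Fin 2 → k) :
    formMul (formMul u u) (formMul v v) = formMul (formMul u v) (formMul u v) := by
  classical
  apply injective_ofFn
  rw [ofFn_formMul (formMul u u) (formMul v v), ofFn_formMul (formMul u v) (formMul u v),
    ofFn_formMul u u, ofFn_formMul v v, ofFn_formMul u v]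
  ring

theorem formMul_two (u v : Fin 2 → k) :
    formMul u v = ![u 0 * v 0, u 0 * v 1 + u 1 * v 0, u 1 * v 1] := by
  ext i
  fin_cases i <;> simp [formMul, Fintype.sum_prod_type, Fin.sum_univ_succ]

theorem pair_smul {n : ℕ} (w : Fin (n + 1) → k) (c : k) (v : Fin (n + 1) → k) :
    pair w (c • v) = c * pair w v := by
  simp only [pair, Pi.smul_apply, smul_eq_mul, mul_sum, mul_left_comm]

variable [IsDomain k]

theorem formMul_ne_zero {f : Fin (a + 1) → k} {g : Fin (b + 1) → k} (hf : f ≠ 0) (hg : g ≠ 0) :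
    formMul f g ≠ 0 := by
  classical
  rw [← map_ne_zero_iff _ (injective_ofFn _), ofFn_formMul]
  exact mul_ne_zero ((map_ne_zero_iff _ (injective_ofFn _)).2 hf)
    ((map_ne_zero_iff _ (injective_ofFn _)).2 hg)

theorem formMul_left_cancel {f : Fin (a + 1) → k} {g g' : Fin (b + 1) → k} (hf : f ≠ 0)
    (h : formMul f g = formMul f g') : g = g' := by
  classical
  apply injective_ofFn
  apply mul_left_cancel₀ ((map_ne_zero_iff _ (injective_ofFn _)).2 hf)
  rw [← ofFn_formMul, ← ofFn_formMul, h]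

end FormMul

section Apolar

variable {k : Type*} [CommRing k]

/- `n` is the degree of the test forms `h`: it cannot be inferred from `w : Fin 6 → k`, hence the
`(n := 1)` below. `IsApolar` and `SqIsApolar` are reducible so that `rw` sees through them to the
form in which the theorem is stated. -/
abbrev IsApolar {m n : ℕ} (w : Fin (m + n + 1) → k) (g : Fin (m + 1) → k) : Prop :=
  ∀ h : Fin (n + 1) → k, pair w (formMul g h) = 0

theorem isApolar_smul_iff [IsDomain k] {m n : ℕ} (w : Fin (m + n + 1) → k) {c : k} (hc : c ≠ 0)
    (g : Fin (m + 1) → k) : IsApolar w (c • g) ↔ IsApolar w g := by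
  simp only [IsApolar, formMul_smul_left, pair_smul, mul_eq_zero, hc, false_or]

end Apolar

section Projective

open Projectivization
open scoped LinearAlgebra.Projectivization

variable {k : Type*} [Field k]

theorem exists_mk_eq_and_isApolar_sq_iff {d n : ℕ} (w : Fin (d + d + n + 1) → k)
    {f : Fin (d + 1) → k} (hf : f ≠ 0) :
    (∃ (q : Fin (d + 1) → k) (hq : q ≠ 0), mk k q hq = mk k f hf ∧ IsApolar w (formMul q q)) ↔
      IsApolar w (formMul f f) := by
  refine ⟨fun ⟨q, hq, hqf, hw⟩ => ?_, fun hw => ⟨f, hf, rfl, hw⟩⟩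
  obtain ⟨c, rfl⟩ := (mk_eq_mk_iff' k q f hq hf).1 hqf
  have hc : c ≠ 0 := by rintro rfl; exact hq (zero_smul k f)
  rwa [formMul_smul_left, formMul_smul_right, smul_smul, isApolar_smul_iff w (mul_ne_zero hc hc)]
    at hw

noncomputable def projMul (z : ℙ k (Fin 2 → k) × ℙ k (Fin 2 → k)) : ℙ k (Fin 3 → k) :=
  mk k (formMul z.1.rep z.2.rep) (formMul_ne_zero z.1.rep_nonzero z.2.rep_nonzero)

theorem projMul_mk {u v : Fin 2 → k} (hu : u ≠ 0) (hv : v ≠ 0) :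
    projMul (mk k u hu, mk k v hv) = mk k (formMul u v) (formMul_ne_zero hu hv) := by
  obtain ⟨a, ha⟩ := exists_smul_eq_mk_rep k u hu
  obtain ⟨b, hb⟩ := exists_smul_eq_mk_rep k v hv
  rw [projMul, mk_eq_mk_iff']
  refine ⟨(a : k) * b, ?_⟩
  rw [← ha, ← hb, Units.smul_def, Units.smul_def, formMul_smul_left, formMul_smul_right,
    smul_smul]

theorem exists_projMul_eq_mk_iff {u : Fin 2 → k} (hu : u ≠ 0) {f : Fin 3 → k} (hf : f ≠ 0) :
    (∃ b, projMul (mk k u hu, b) = mk k f hf) ↔ ∃ v : Fin 2 → k, formMul u v = f := by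
  constructor
  · rintro ⟨b, hb⟩
    induction b using Projectivization.ind with | h v hv => ?_
    obtain ⟨c, hc⟩ := (mk_eq_mk_iff' k _ _ _ _).1 ((projMul_mk hu hv).symm.trans hb)
    have hc0 : c ≠ 0 := by rintro rfl; exact formMul_ne_zero hu hv (hc ▸ zero_smul k f)
    refine ⟨c⁻¹ • v, ?_⟩
    rw [formMul_smul_right, ← hc, smul_smul, inv_mul_cancel₀ hc0, one_smul]
  · rintro ⟨v, rfl⟩
    have hv : v ≠ 0 := by rintro rfl; exact hf (by ext; simp [formMul])
    exact ⟨mk k v hv, projMul_mk hu hv⟩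

theorem projMul_right_injective (a : ℙ k (Fin 2 → k)) :
    Function.Injective fun b => projMul (a, b) := by
  intro b b' hbb'
  induction a using Projectivization.ind with | h u hu => ?_
  induction b using Projectivization.ind with | h v hv => ?_
  induction b' using Projectivization.ind with | h v' hv' => ?_
  obtain ⟨c, hc⟩ := (mk_eq_mk_iff' k _ _ _ _).1 <|
    (projMul_mk hu hv).symm.trans (hbb'.trans (projMul_mk hu hv'))
  rw [← formMul_smul_right] at hc
  exact (mk_eq_mk_iff' k _ _ _ _).2 ⟨c, formMul_left_cancel hu hc⟩

abbrev SqIsApolar (w : Fin 6 → k) (x : ℙ k (Fin 3 → k)) : Prop :=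
  ∃ (q : Fin 3 → k) (hq : q ≠ 0), mk k q hq = x ∧ IsApolar (n := 1) w (formMul q q)

theorem exists_isApolar_sq_mul_sq_iff (w : Fin 6 → k)
    (z : ℙ k (Fin 2 → k) × ℙ k (Fin 2 → k)) :
    (∃ (l₁ l₂ : Fin 2 → k) (h₁ : l₁ ≠ 0) (h₂ : l₂ ≠ 0), mk k l₁ h₁ = z.1 ∧ mk k l₂ h₂ = z.2 ∧
        IsApolar (n := 1) w (formMul (formMul l₁ l₁) (formMul l₂ l₂))) ↔
      SqIsApolar w (projMul z) := by
  obtain ⟨z₁, z₂⟩ := z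
  constructor
  · rintro ⟨l₁, l₂, h₁, h₂, rfl, rfl, hw⟩
    exact ⟨formMul l₁ l₂, formMul_ne_zero h₁ h₂, (projMul_mk h₁ h₂).symm,
      formMul_sq_mul_sq l₁ l₂ ▸ hw⟩
  · rintro ⟨q, hq, hqz, hw⟩
    refine ⟨z₁.rep, z₂.rep, z₁.rep_nonzero, z₂.rep_nonzero, mk_rep z₁, mk_rep z₂, ?_⟩
    rw [formMul_sq_mul_sq]
    exact (exists_mk_eq_and_isApolar_sq_iff (d := 2) (n := 1) w _).1 ⟨q, hq, hqz, hw⟩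

end Projective

section ProjectiveLine

open Projectivization
open scoped LinearAlgebra.Projectivization

variable {k : Type*} [Field k]

/-- `linFactor (some t)` is the form `y - t x`, vanishing at the point `(1 : t)` of `ℙ¹`;
`linFactor none = x` vanishes at the remaining point `(0 : 1)`. -/
def linFactor : Option k → Fin 2 → k
  | none => ![1, 0]
  | some t => ![-t, 1]

theorem linFactor_ne_zero (o : Option k) : linFactor o ≠ 0 := by
  cases o <;> simp [linFactor, funext_iff, Fin.forall_fin_two]

theorem bijective_mk_linFactor :
    Function.Bijective fun o : Option k => mk k (linFactor o) (linFactor_ne_zero o) := by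
  constructor
  · intro o o' h
    obtain ⟨c, hc⟩ := (mk_eq_mk_iff' k _ _ _ _).1 h
    have h0 := congrFun hc 0
    have h1 := congrFun hc 1
    cases o <;> cases o' <;> simp_all [linFactor]
  · intro x
    induction x using Projectivization.ind with | h v hv => ?_
    by_cases h1 : v 1 = 0
    · have h0 : v 0 ≠ 0 := fun h0 => hv (by ext i; fin_cases i <;> assumption)
      refine ⟨none, (mk_eq_mk_iff' k _ _ _ _).2 ⟨(v 0)⁻¹, ?_⟩⟩
      ext i; fin_cases i <;> simp [linFactor, h0, h1]
    · refine ⟨some (-(v 0 / v 1)), (mk_eq_mk_iff' k _ _ _ _).2 ⟨(v 1)⁻¹, ?_⟩⟩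
      ext i; fin_cases i <;> simp [linFactor, h1, div_eq_inv_mul]

theorem formMul_linFactor_some (t : k) (v : Fin 2 → k) :
    formMul (linFactor (some t)) v = ![-t * v 0, -t * v 1 + v 0, v 1] := by
  simp [formMul_two, linFactor]

theorem exists_formMul_linFactor_some_eq_iff (t : k) (f : Fin 3 → k) :
    (∃ v : Fin 2 → k, formMul (linFactor (some t)) v = f) ↔ f 2 * (t * t) + f 1 * t + f 0 = 0 := by
  constructor
  · rintro ⟨v, rfl⟩
    rw [formMul_linFactor_some]
    show v 1 * (t * t) + (-t * v 1 + v 0) * t + -t * v 0 = 0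
    ring
  · intro h
    refine ⟨![f 1 + t * f 2, f 2], ?_⟩
    rw [formMul_linFactor_some]
    ext i
    fin_cases i
    · show -t * (f 1 + t * f 2) = f 0
      linear_combination -h
    · show -t * f 2 + (f 1 + t * f 2) = f 1
      ring
    · rfl

theorem exists_formMul_linFactor_none_eq_iff (f : Fin 3 → k) :
    (∃ v : Fin 2 → k, formMul (linFactor none) v = f) ↔ f 2 = 0 := by
  constructor
  · rintro ⟨v, rfl⟩
    simp [formMul_two, linFactor]
  · intro h
    refine ⟨![f 0, f 1], ?_⟩
    ext i; fin_cases i <;> simp [formMul_two, linFactor, h]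

end ProjectiveLine

section Count

variable {k : Type*} [Field k] [Fintype k] [DecidableEq k]

theorem card_quadratic_roots (hk : ringChar k ≠ 2) {a b c : k} (ha : a ≠ 0) :
    (#{x | a * (x * x) + b * x + c = 0} : ℤ) = quadraticChar k (discrim a b c) + 1 := by
  have : NeZero (2 : k) := ⟨Ring.two_ne_zero hk⟩
  have h2a : 2 * a ≠ 0 := mul_ne_zero two_ne_zero ha
  rw [← quadraticChar_card_sqrts hk]
  congr 1
  refine card_nbij' (fun x => 2 * a * x + b) (fun y => (y - b) / (2 * a)) ?_ ?_ ?_ ?_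
  · intro x hx
    simpa [quadratic_eq_zero_iff_discrim_eq_sq ha, eq_comm] using hx
  · intro y hy
    simp only [coe_filter, mem_univ, true_and, Set.mem_ofPred_eq, Set.coe_toFinset] at hy ⊢
    rw [quadratic_eq_zero_iff_discrim_eq_sq ha, ← hy]
    field_simp
    ring
  · intro x _
    field_simp
    ring
  · intro y _
    field_simp
    ring

theorem card_quadratic_roots_add_ite (hk : ringChar k ≠ 2) {a b c : k}
    (habc : a ≠ 0 ∨ b ≠ 0 ∨ c ≠ 0) :
    (#{x | a * (x * x) + b * x + c = 0} : ℤ) + (if a = 0 then 1 else 0) =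
      quadraticChar k (discrim a b c) + 1 := by
  by_cases ha : a = 0
  · subst ha
    by_cases hb : b = 0
    · subst hb
      have hc : c ≠ 0 := by simpa using habc
      simp [hc, discrim]
    · have : ({x | b * x + c = 0} : Finset k) = {-c / b} := by
        ext x
        simp only [mem_filter, mem_univ, true_and, mem_singleton]
        constructor <;> intro h <;> field_simp at h ⊢ <;> linear_combination h
      simp [this, discrim, quadraticChar_sq_one' hb]
  · rw [card_quadratic_roots hk ha, if_neg ha, add_zero]

end Count

section Fiber

open Projectivization
open scoped LinearAlgebra.Projectivization Classical

noncomputable instance {K V : Type*} [DivisionRing K] [AddCommGroup V] [Module K V] [Finite V] :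
    Fintype (ℙ K V) :=
  Fintype.ofFinite _

variable {k : Type*} [Field k] [Fintype k]

theorem card_filter_projectiveLine (P : ℙ k (Fin 2 → k) → Prop) [DecidablePred P] :
    #{x | P x} = #{t | P (mk k (linFactor (some t)) (linFactor_ne_zero _))} +
      if P (mk k (linFactor none) (linFactor_ne_zero none)) then 1 else 0 := by
  simp only [card_filter]
  rw [← bijective_mk_linFactor.sum_comp, Fintype.sum_option, add_comm]

theorem card_fiber_projMul_eq_card_filter (s : ℙ k (Fin 3 → k)) :
    #{z | projMul z = s} = #{a | ∃ b, projMul (a, b) = s} := by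
  refine card_nbij Prod.fst (fun z hz => ?_) (fun z hz z' hz' h => ?_) (fun a ha => ?_)
  · simp only [coe_filter, mem_univ, true_and, Set.mem_ofPred_eq] at hz ⊢
    exact ⟨z.2, hz⟩
  · obtain ⟨a, b⟩ := z
    obtain ⟨a', b'⟩ := z'
    simp only [coe_filter, mem_univ, true_and, Set.mem_ofPred_eq] at hz hz' h
    subst h
    rw [projMul_right_injective a (hz.trans hz'.symm)]
  · simp only [coe_filter, mem_univ, true_and, Set.mem_ofPred_eq] at ha
    obtain ⟨b, hb⟩ := ha
    exact ⟨(a, b), by simpa using hb, rfl⟩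

theorem card_fiber_projMul [DecidableEq k] (hk : ringChar k ≠ 2) {f : Fin 3 → k} (hf : f ≠ 0) :
    (#{z | projMul z = mk k f hf} : ℤ) = quadraticChar k (disc f) + 1 := by
  have hroots : f 2 ≠ 0 ∨ f 1 ≠ 0 ∨ f 0 ≠ 0 := by
    contrapose! hf
    ext i; fin_cases i <;> simp [hf]
  rw [card_fiber_projMul_eq_card_filter, card_filter_projectiveLine]
  simp only [exists_projMul_eq_mk_iff, exists_formMul_linFactor_some_eq_iff,
    exists_formMul_linFactor_none_eq_iff]
  push_cast
  rw [card_quadratic_roots_add_ite hk hroots, disc, discrim, mul_right_comm 4]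

theorem card_filter_comp_projMul [DecidableEq k] (hk : ringChar k ≠ 2) (P : ℙ k (Fin 3 → k) → Prop)
    [DecidablePred P] :
    (#{z | P (projMul z)} : ℤ) = ∑ s with P s, (quadraticChar k (disc s.rep) + 1) := by
  have hsum : #{z | P (projMul z)} = ∑ s with P s, #{z | projMul z = s} := by
    rw [sum_card_fiberwise_eq_card_filter univ {s | P s} projMul]
    simp
  rw [hsum]
  push_cast
  refine sum_congr rfl fun s _ => ?_
  conv_lhs => rw [← mk_rep s]
  exact card_fiber_projMul hk s.rep_nonzero

theorem natCard_isApolar_sq_mul_sq_eq_sum [DecidableEq k] (hk : ringChar k ≠ 2) (w : Fin 6 → k) :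
    (Nat.card {z : ℙ k (Fin 2 → k) × ℙ k (Fin 2 → k) //
      ∃ (l₁ l₂ : Fin 2 → k) (h₁ : l₁ ≠ 0) (h₂ : l₂ ≠ 0), mk k l₁ h₁ = z.1 ∧ mk k l₂ h₂ = z.2 ∧
        IsApolar (n := 1) w (formMul (formMul l₁ l₁) (formMul l₂ l₂))} : ℤ) =
      ∑ s with SqIsApolar w s, (quadraticChar k (disc s.rep) + 1) := by
  rw [Nat.card_congr (Equiv.subtypeEquivRight (exists_isApolar_sq_mul_sq_iff w)),
    Nat.subtype_card _ fun z => mem_filter_univ z]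
  exact card_filter_comp_projMul hk (SqIsApolar w)

end Fiber

open scoped Classical in
/-- For odd `p`, the difference of the two counts `Ñ_{2²,1:w} - Ñ_{1²,1²,1:w}` equals
minus the sum of the Legendre symbols `χ(Disc f)` over classes `[f] ∈ ℙ(V₂^*)` with
`f²` apolar to `w`. -/
theorem stmt11 (p : ℕ) [Fact p.Prime] (hp : p ≠ 2) (w : Fin 6 → ZMod p) :
    (Nat.card {x : Projectivization (ZMod p) (Fin 3 → ZMod p) //
        ∃ (q : Fin 3 → ZMod p) (hq : q ≠ 0), Projectivization.mk (ZMod p) q hq = x ∧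
          ∀ h : Fin 2 → ZMod p, pair w (formMul (formMul q q) h) = 0} : ℤ) -
    (Nat.card {x : Projectivization (ZMod p) (Fin 2 → ZMod p) ×
        Projectivization (ZMod p) (Fin 2 → ZMod p) //
      ∃ (l1 l2 : Fin 2 → ZMod p) (h1 : l1 ≠ 0) (h2 : l2 ≠ 0),
        Projectivization.mk (ZMod p) l1 h1 = x.1 ∧
        Projectivization.mk (ZMod p) l2 h2 = x.2 ∧
        ∀ h : Fin 2 → ZMod p,
          pair w (formMul (formMul (formMul l1 l1) (formMul l2 l2)) h) = 0} : ℤ) =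
    - ∑ᶠ x : Projectivization (ZMod p) (Fin 3 → ZMod p),
        if ∃ (f : Fin 3 → ZMod p) (hf : f ≠ 0), Projectivization.mk (ZMod p) f hf = x ∧
            ∀ h : Fin 2 → ZMod p, pair w (formMul (formMul f f) h) = 0
        then quadraticChar (ZMod p) (disc x.rep) else 0 := by
  have hk : ringChar (ZMod p) ≠ 2 := by rwa [ZMod.ringChar_zmod_n]
  rw [natCard_isApolar_sq_mul_sq_eq_sum hk w, Nat.subtype_card _ fun x => mem_filter_univ x,
    finsum_eq_sum_of_fintype, ← sum_filter, sum_add_distrib]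
  simp only [sum_const, nsmul_eq_mul, mul_one]
  ring
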